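/- Consider the loss function L(w) = (1/(2m))·Σ_{μ=1}^m ‖(∏_{r=1}^R (W^{r,1} + I))x^μ − y^μ‖₂² of a 1-shortcut linear network. For two parameters w₁ = w^{r,1}_{i₁,j₁} and w₂ = w^{r,1}_{i₂,j₂} lying in the same residual unit r, the second-order partial derivative at the zero weight configuration is ∂²L/∂w₁∂w₂|_{w=0} = (1/m)·Σ_{μ=1}^m x^μ_{j₁}·x^μ_{j₂} if i₁ = i₂, and equals 0 if i₁ ≠ i₂. -/

import Mathlib

noncomputable section

open scoped BigOperators

/-- Matrix–vector product. -/
def mvec {d : ℕ} (M : Fin d → Fin d → ℝ) (v : Fin d → ℝ) : Fin d → ℝ :=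
  fun i => ∑ j, M i j * v j

/-- The 1-shortcut linear network: `x ↦ (W^{R,1}+I)⋯(W^{1,1}+I) x`, where the `r`-th
residual unit computes `x ↦ W^{r,1} x + x`. -/
def linNet {d : ℕ} (W : ℕ → Fin d → Fin d → ℝ) : ℕ → (Fin d → ℝ) → (Fin d → ℝ)
  | 0, x => x
  | r + 1, x => fun i => mvec (W r) (linNet W r x) i + linNet W r x i

/-- The loss function of a 1-shortcut linear network with `R` residual units,
`L(w) = (1/(2m)) ∑_μ ‖(∏_r (W^{r,1}+I)) x^μ − y^μ‖₂²`. -/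
def linLoss {d m : ℕ} (R : ℕ) (X Y : Fin m → Fin d → ℝ)
    (W : Fin R → Fin d → Fin d → ℝ) : ℝ :=
  (1 / (2 * (m : ℝ))) * ∑ μ : Fin m, ∑ i,
    (linNet (fun r => if h : r < R then W ⟨r, h⟩ else 0) R (X μ) i - Y μ i) ^ 2

/-- The coordinate direction in weight space corresponding to the parameter `w^{r,1}_{i,j}`. -/
def linDir (R d : ℕ) (r : Fin R) (i j : Fin d) : Fin R → Fin d → Fin d → ℝ :=
  fun r' i' j' => if r' = r ∧ i' = i ∧ j' = j then 1 else 0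

/-- Second-order partial derivative of `f` at `0` along the directions `v₁, v₂`. -/
def d2 {E : Type*} [NormedAddCommGroup E] [NormedSpace ℝ E] (f : E → ℝ) (v₁ v₂ : E) : ℝ :=
  fderiv ℝ (fun w => fderiv ℝ f w v₂) (0 : E) v₁

lemma mvec_zero {d : ℕ} (v : Fin d → ℝ) : mvec (0 : Fin d → Fin d → ℝ) v = 0 := by
  funext i; simp [mvec]

lemma linNet_single {d : ℕ} (W : ℕ → Fin d → Fin d → ℝ) (r0 : ℕ)
    (A : Fin d → Fin d → ℝ) (hW : ∀ k, W k = if k = r0 then A else 0)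
    (x : Fin d → ℝ) :
    ∀ k, linNet W k x = if r0 < k then (fun i => x i + mvec A x i) else x := by
  intro k
  induction k with
  | zero => simp [linNet]
  | succ k ih =>
    rcases lt_trichotomy k r0 with h | h | h
    · have h1 : ¬ r0 < k := by omega
      have h2 : ¬ r0 < k + 1 := by omega
      have hk : k ≠ r0 := by omega
      have hWk : W k = 0 := by rw [hW, if_neg hk]
      simp only [linNet, ih, if_neg h1, if_neg h2, hWk, mvec_zero]
      funext i; simp
    · subst h
      have h1 : ¬ k < k := lt_irrefl k
      have hWk : W k = A := by rw [hW, if_pos rfl]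
      simp only [linNet, ih, if_neg h1, if_pos (Nat.lt_succ_self k), hWk]
      funext i; ring
    · have h2 : r0 < k + 1 := by omega
      have hk : k ≠ r0 := by omega
      have hWk : W k = 0 := by rw [hW, if_neg hk]
      simp only [linNet, ih, if_pos h, if_pos h2, hWk, mvec_zero]
      funext i; simp

lemma contDiff_linNet {d R : ℕ} (x : Fin d → ℝ) (k : ℕ) (i : Fin d) :
    ContDiff ℝ (⊤ : ℕ∞) (fun W : Fin R → Fin d → Fin d → ℝ =>
      linNet (fun r => if h : r < R then W ⟨r, h⟩ else 0) k x i) := by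
  induction k generalizing i with
  | zero => exact contDiff_const
  | succ k ih =>
    simp only [linNet, mvec]
    apply ContDiff.add _ (ih i)
    apply ContDiff.sum
    intro j _
    apply ContDiff.mul _ (ih j)
    by_cases h : k < R
    · simp only [dif_pos h]
      exact ((contDiff_apply_apply (𝕜 := ℝ) (E := ℝ) i j).comp
        (contDiff_apply (𝕜 := ℝ) (E := Fin d → Fin d → ℝ) (⟨k, h⟩ : Fin R)))
    · simp only [dif_neg h]
      exact contDiff_const

lemma contDiff_linLoss {d m R : ℕ} (X Y : Fin m → Fin d → ℝ) :
    ContDiff ℝ (⊤ : ℕ∞) (linLoss R X Y) := by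
  unfold linLoss
  apply ContDiff.mul contDiff_const
  apply ContDiff.sum; intro μ _
  apply ContDiff.sum; intro i _
  exact ((contDiff_linNet (X μ) R i).sub contDiff_const).pow 2

lemma mvec_single {d : ℕ} (t s : ℝ) (i₁ j₁ i₂ j₂ i : Fin d) (x : Fin d → ℝ) :
    mvec (fun i' j' => t * (if i' = i₁ ∧ j' = j₁ then 1 else 0)
        + s * (if i' = i₂ ∧ j' = j₂ then 1 else 0)) x i
      = t * (if i = i₁ then x j₁ else 0) + s * (if i = i₂ then x j₂ else 0) := by
  simp only [mvec, add_mul, Finset.sum_add_distrib]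
  congr 1
  · by_cases h : i = i₁ <;>
      simp [h, mul_ite, ite_mul, Finset.sum_ite_eq']
  · by_cases h : i = i₂ <;>
      simp [h, mul_ite, ite_mul, Finset.sum_ite_eq']

lemma linLoss_eval {d m R : ℕ} (X Y : Fin m → Fin d → ℝ) (r : Fin R)
    (i₁ j₁ i₂ j₂ : Fin d) (t s : ℝ) :
    linLoss R X Y (t • linDir R d r i₁ j₁ + s • linDir R d r i₂ j₂)
      = (1 / (2 * (m : ℝ))) * ∑ μ : Fin m, ∑ i,
          ((X μ i - Y μ i) + (t * (if i = i₁ then X μ j₁ else 0)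
            + s * (if i = i₂ then X μ j₂ else 0))) ^ 2 := by
  set A : Fin d → Fin d → ℝ := fun i' j' =>
    t * (if i' = i₁ ∧ j' = j₁ then 1 else 0) + s * (if i' = i₂ ∧ j' = j₂ then 1 else 0)
    with hA
  have hW : ∀ k : ℕ, (fun k => if h : k < R then
      (t • linDir R d r i₁ j₁ + s • linDir R d r i₂ j₂) ⟨k, h⟩ else 0) k
      = if k = (r : ℕ) then A else 0 := by
    intro k
    by_cases hk : k < R
    · simp only [dif_pos hk]
      by_cases hkr : k = (r : ℕ)
      · have : (⟨k, hk⟩ : Fin R) = r := by exact Fin.ext hkr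
        rw [if_pos hkr]
        funext i' j'
        simp [linDir, this, hA]
      · have : (⟨k, hk⟩ : Fin R) ≠ r := by
          intro hc; exact hkr (by simpa using congrArg Fin.val hc)
        rw [if_neg hkr]
        funext i' j'
        simp [linDir, this]
    · have : k ≠ (r : ℕ) := by have := r.isLt; omega
      simp [dif_neg hk, this]
  unfold linLoss
  congr 1
  apply Finset.sum_congr rfl; intro μ _
  apply Finset.sum_congr rfl; intro i _
  rw [linNet_single _ (r : ℕ) A hW (X μ) R, if_pos r.isLt]
  rw [hA, mvec_single]
  ring

/-- Theorem 2, part 3: diagonal block `B` of the Hessian. For two parameters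
`w₁ = w^{r,1}_{i₁,j₁}` and `w₂ = w^{r,1}_{i₂,j₂}` in the same residual unit of a 1-shortcut
linear network, the second partial of the loss at `w = 0` is `(1/m)·∑_μ x^μ_{j₁} x^μ_{j₂}`
if `i₁ = i₂` and `0` otherwise. -/
theorem one_shortcut_hessian_same_unit
    {dx m R : ℕ} (X Y : Fin m → Fin dx → ℝ)
    (r : Fin R) (i₁ j₁ i₂ j₂ : Fin dx) :
    d2 (linLoss R X Y) (linDir R dx r i₁ j₁) (linDir R dx r i₂ j₂) =
      if i₁ = i₂ then (1 / (m : ℝ)) * ∑ μ : Fin m, X μ j₁ * X μ j₂ else 0 := by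
  set f := linLoss R X Y with hfdef
  set v₁ := linDir R dx r i₁ j₁ with hv1
  set v₂ := linDir R dx r i₂ j₂ with hv2
  have hf : ContDiff ℝ (⊤ : ℕ∞) f := contDiff_linLoss X Y
  have hfd : Differentiable ℝ f := hf.differentiable (by simp)
  -- directional derivative as a 1-d derivative
  have key1 : ∀ w, fderiv ℝ f w v₂ = deriv (fun s : ℝ => f (w + s • v₂)) 0 := by
    intro w
    have hline : HasDerivAt (fun s : ℝ => w + s • v₂) v₂ 0 := by
      simpa using ((hasDerivAt_id (0 : ℝ)).smul_const v₂).const_add w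
    have h2 := (hfd w).hasFDerivAt.comp_hasDerivAt_of_eq (0 : ℝ) hline (by simp)
    have h3 : HasDerivAt (fun s : ℝ => f (w + s • v₂)) (fderiv ℝ f w v₂) 0 := h2
    rw [h3.deriv]
  -- the inner derivative, explicitly
  have hval : ∀ t : ℝ, fderiv ℝ f (t • v₁) v₂
      = (1 / (2 * (m : ℝ))) * ∑ μ : Fin m, ∑ i,
          2 * ((X μ i - Y μ i) + t * (if i = i₁ then X μ j₁ else 0))
            * (if i = i₂ then X μ j₂ else 0) := by
    intro t
    rw [key1]
    have heq : (fun s : ℝ => f (t • v₁ + s • v₂))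
        = fun s : ℝ => (1 / (2 * (m : ℝ))) * ∑ μ : Fin m, ∑ i,
            ((X μ i - Y μ i) + (t * (if i = i₁ then X μ j₁ else 0)
              + s * (if i = i₂ then X μ j₂ else 0))) ^ 2 :=
      funext fun s => linLoss_eval X Y r i₁ j₁ i₂ j₂ t s
    rw [heq]
    have hD : HasDerivAt (fun s : ℝ => (1 / (2 * (m : ℝ))) * ∑ μ : Fin m, ∑ i,
        ((X μ i - Y μ i) + (t * (if i = i₁ then X μ j₁ else 0)
          + s * (if i = i₂ then X μ j₂ else 0))) ^ 2)
        ((1 / (2 * (m : ℝ))) * ∑ μ : Fin m, ∑ i,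
          2 * ((X μ i - Y μ i) + t * (if i = i₁ then X μ j₁ else 0))
            * (if i = i₂ then X μ j₂ else 0)) 0 := by
      apply HasDerivAt.const_mul
      apply HasDerivAt.fun_sum; intro μ _
      apply HasDerivAt.fun_sum; intro i _
      have base : HasDerivAt (fun s : ℝ => (X μ i - Y μ i)
          + (t * (if i = i₁ then X μ j₁ else 0) + s * (if i = i₂ then X μ j₂ else 0)))
          (if i = i₂ then X μ j₂ else 0) 0 :=
        ((hasDerivAt_mul_const (if i = i₂ then X μ j₂ else 0)).const_add
          (t * (if i = i₁ then X μ j₁ else 0))).const_add (X μ i - Y μ i)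
      simpa using base.fun_pow 2
    exact hD.deriv
  -- the second derivative as a 1-d derivative of the inner one
  have hg : DifferentiableAt ℝ (fun w => fderiv ℝ f w v₂) 0 := by
    have h1 : ContDiff ℝ 1 (fun w => fderiv ℝ f w) := hf.fderiv_right (by exact WithTop.coe_le_coe.mpr le_top)
    exact (((ContinuousLinearMap.apply ℝ ℝ v₂).contDiff.comp h1).differentiable
      one_ne_zero) 0
  have key2 : d2 f v₁ v₂ = deriv (fun t : ℝ => fderiv ℝ f (t • v₁) v₂) 0 := by
    have hline : HasDerivAt (fun t : ℝ => t • v₁) v₁ 0 := by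
      simpa using (hasDerivAt_id (0 : ℝ)).smul_const v₁
    have h2 := hg.hasFDerivAt.comp_hasDerivAt_of_eq (0 : ℝ) hline (by simp)
    have h3 : HasDerivAt (fun t : ℝ => fderiv ℝ f (t • v₁) v₂)
        (fderiv ℝ (fun w => fderiv ℝ f w v₂) 0 v₁) 0 := h2
    rw [d2, h3.deriv]
  rw [key2]
  have heq2 : (fun t : ℝ => fderiv ℝ f (t • v₁) v₂)
      = fun t : ℝ => (1 / (2 * (m : ℝ))) * ∑ μ : Fin m, ∑ i,
          2 * ((X μ i - Y μ i) + t * (if i = i₁ then X μ j₁ else 0))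
            * (if i = i₂ then X μ j₂ else 0) := funext hval
  rw [heq2]
  have hD2 : HasDerivAt (fun t : ℝ => (1 / (2 * (m : ℝ))) * ∑ μ : Fin m, ∑ i,
      2 * ((X μ i - Y μ i) + t * (if i = i₁ then X μ j₁ else 0))
        * (if i = i₂ then X μ j₂ else 0))
      ((1 / (2 * (m : ℝ))) * ∑ μ : Fin m, ∑ i,
        2 * (if i = i₁ then X μ j₁ else 0) * (if i = i₂ then X μ j₂ else 0)) 0 := by
    apply HasDerivAt.const_mul
    apply HasDerivAt.fun_sum; intro μ _
    apply HasDerivAt.fun_sum; intro i _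
    have base : HasDerivAt (fun t : ℝ => (X μ i - Y μ i)
        + t * (if i = i₁ then X μ j₁ else 0)) (if i = i₁ then X μ j₁ else 0) 0 :=
      (hasDerivAt_mul_const (if i = i₁ then X μ j₁ else 0)).const_add (X μ i - Y μ i)
    simpa using (base.const_mul 2).mul_const (if i = i₂ then X μ j₂ else 0)
  rw [hD2.deriv]
  -- final arithmetic
  by_cases h : i₁ = i₂
  · subst h
    simp only [if_pos rfl]
    have hinner : ∀ μ : Fin m, (∑ i, 2 * (if i = i₁ then X μ j₁ else 0)
        * (if i = i₁ then X μ j₂ else 0)) = 2 * (X μ j₁ * X μ j₂) := by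
      intro μ
      rw [Finset.sum_eq_single i₁]
      · simp [mul_assoc]
      · intro b _ hb; simp [hb]
      · intro hb; exact absurd (Finset.mem_univ i₁) hb
    simp only [hinner]
    rw [← Finset.mul_sum]
    by_cases hm : (m : ℝ) = 0
    · have : m = 0 := by exact_mod_cast hm
      subst this
      simp
    · field_simp
      simp only [if_true]
      field_simp
  · have hz : ∀ (μ : Fin m) (i : Fin dx), 2 * (if i = i₁ then X μ j₁ else 0)
        * (if i = i₂ then X μ j₂ else 0) = 0 := by
      intro μ i
      by_cases h1 : i = i₁
      · subst h1
        rw [if_neg (fun h2 => h h2)]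
        ring
      · rw [if_neg h1]; ring
    simp only [hz, Finset.sum_const_zero, mul_zero, if_neg h]

end
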